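/- Let b ≥ 1 and s0 > b/2. There exists K0 ≥ 1, depending only on b and s0, such that, with matrix s-norms defined using this K0, for every s ≥ s0 there is a constant C(s) ≥ 1, independent of the index sets, with C(s0) = 1, such that for all finite subsets B, C, D ⊆ ℤ^b × {0,1} and all M1 ∈ 𝓜^C_D, M2 ∈ 𝓜^B_C: ‖M1 M2‖_s ≤ (1/2)‖M1‖_{s0}‖M2‖_s + (C(s)/2)‖M1‖_s‖M2‖_{s0}; in particular ‖M1 M2‖_s ≤ C(s)‖M1‖_s‖M2‖_s. -/

import Mathlib

open scoped BigOperators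

namespace NLSPaper

abbrev Site (b : ℕ) := (Fin b → ℤ) × Bool

variable {b : ℕ}

/-- sup-norm of an integer vector -/
def znorm {b : ℕ} (i : Fin b → ℤ) : ℕ := Finset.univ.sup fun t => (i t).natAbs

/-- ⟨i⟩ := max(|i|,1) -/
def wt {b : ℕ} (i : Fin b → ℤ) : ℕ := max (znorm i) 1

/-- distance between sites -/
def sdist {b : ℕ} (k k' : Site b) : ℕ :=
  max (znorm (k.1 - k'.1)) (if k.2 = k'.2 then 0 else 1)

/-- Frobenius norm of the 2×2 block of `M` at spatial indices `(i,i')`,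
restricted to row set `C` and column set `B`. -/
noncomputable def blockNorm (B C : Finset (Site b)) (M : Site b → Site b → ℂ)
    (i i' : Fin b → ℤ) : NNReal :=
  NNReal.sqrt (∑ a : Bool, ∑ a' : Bool,
    if (i, a) ∈ C ∧ (i', a') ∈ B then ‖M (i, a) (i', a')‖₊ ^ 2 else 0)

/-- `[M(n)]`: max of the block norms on the `n`-th diagonal. -/
noncomputable def decayCoef (B C : Finset (Site b)) (M : Site b → Site b → ℂ)
    (n : Fin b → ℤ) : NNReal :=
  ((((C.image Prod.fst) ×ˢ (B.image Prod.fst)).filter fun p => p.1 - p.2 = n).sup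
    fun p => blockNorm B C M p.1 p.2)

/-- square of the `s`-norm of a matrix with column set `B` and row set `C` -/
noncomputable def sNormSq (K0 s : ℝ) (B C : Finset (Site b)) (M : Site b → Site b → ℂ) : ℝ :=
  K0 * ∑ n ∈ ((C.image Prod.fst) ×ˢ (B.image Prod.fst)).image (fun p => p.1 - p.2),
    (decayCoef B C M n : ℝ) ^ 2 * (wt n : ℝ) ^ (2 * s)

/-- the `s`-norm of a matrix with column set `B` and row set `C` -/
noncomputable def sNorm (K0 s : ℝ) (B C : Finset (Site b)) (M : Site b → Site b → ℂ) : ℝ :=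
  Real.sqrt (sNormSq K0 s B C M)

noncomputable def mAdd (M1 M2 : Site b → Site b → ℂ) : Site b → Site b → ℂ :=
  fun k k' => M1 k k' + M2 k k'

/-- product of matrices, relative to the middle index set `C` -/
noncomputable def mMul (C : Finset (Site b)) (M1 M2 : Site b → Site b → ℂ) : Site b → Site b → ℂ :=
  fun k k' => ∑ q ∈ C, M1 k q * M2 q k'

/-- ℓ²-operator norm of a matrix with column set `B` and row set `C` -/
noncomputable def opNorm (B C : Finset (Site b)) (M : Site b → Site b → ℂ) : ℝ :=
  ‖LinearMap.toContinuousLinearMap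
      (Matrix.toEuclideanLin
        (Matrix.of fun (k : {x // x ∈ C}) (k' : {x // x ∈ B}) => M k.1 k'.1))‖




section Aux
variable {b : ℕ}






lemma one_le_wt (n : Fin b → ℤ) : 1 ≤ wt n := le_max_right _ _

lemma one_le_wtR (n : Fin b → ℤ) : (1 : ℝ) ≤ (wt n : ℝ) := by
  exact_mod_cast one_le_wt n

lemma wt_pos (n : Fin b → ℤ) : (0 : ℝ) < (wt n : ℝ) := lt_of_lt_of_le one_pos (one_le_wtR n)

lemma coord_le_znorm (x : Fin b → ℤ) (t : Fin b) : (x t).natAbs ≤ znorm x :=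
  Finset.le_sup (f := fun t => (x t).natAbs) (Finset.mem_univ t)

lemma znorm_add_le (x y : Fin b → ℤ) : znorm (x + y) ≤ znorm x + znorm y := by
  apply Finset.sup_le
  intro t _
  calc ((x + y) t).natAbs = (x t + y t).natAbs := rfl
    _ ≤ (x t).natAbs + (y t).natAbs := Int.natAbs_add_le _ _
    _ ≤ znorm x + znorm y := by gcongr <;> exact coord_le_znorm _ t

lemma wt_add_le (x y : Fin b → ℤ) : wt (x + y) ≤ wt x + wt y := by
  have h1 : znorm (x + y) ≤ znorm x + znorm y := znorm_add_le x y
  unfold wt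
  omega

lemma wt_triangle (n m : Fin b → ℤ) : (wt n : ℝ) ≤ (wt m : ℝ) + (wt (n - m) : ℝ) := by
  have : wt n ≤ wt m + wt (n - m) := by
    have h := wt_add_le m (n - m)
    rwa [add_sub_cancel] at h
  exact_mod_cast this

lemma wt_coord (m : Fin b → ℤ) (t : Fin b) : ((max (m t).natAbs 1 : ℕ) : ℝ) ≤ (wt m : ℝ) := by
  have : max (m t).natAbs 1 ≤ wt m := max_le (le_trans (coord_le_znorm m t) (le_max_left _ _)) (one_le_wt m)
  exact_mod_cast this

/-- one-dimensional weight -/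
noncomputable def w1 (k : ℤ) : ℝ := ((max k.natAbs 1 : ℕ) : ℝ)

lemma one_le_w1 (k : ℤ) : (1:ℝ) ≤ w1 k := by
  have h : 1 ≤ max k.natAbs 1 := le_max_right _ _
  unfold w1; exact_mod_cast h

lemma summable_w1 {p : ℝ} (hp : 1 < p) : Summable (fun k : ℤ => w1 k ^ (-p)) := by
  have hnat : Summable (fun n : ℕ => ((n : ℝ)) ^ (-p)) := by
    have h2 := Real.summable_nat_rpow_inv.mpr hp
    refine h2.congr fun n => ?_
    rw [Real.rpow_neg (Nat.cast_nonneg n)]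
  have hg : Summable (fun n : ℕ => w1 (n : ℤ) ^ (-p)) := by
    rw [← summable_nat_add_iff 1] at hnat ⊢
    refine hnat.congr fun n => ?_
    have hw : w1 ((n + 1 : ℕ) : ℤ) = ((n + 1 : ℕ) : ℝ) := by
      unfold w1
      congr 1
      have h3 : ((n + 1 : ℕ) : ℤ).natAbs = n + 1 := by omega
      rw [h3]
      omega
    rw [hw]
  have hneg : Summable (fun n : ℕ => w1 (-(n : ℤ)) ^ (-p)) := by
    refine hg.congr fun n => ?_
    have : w1 (-(n:ℤ)) = w1 (n : ℤ) := by unfold w1; rw [Int.natAbs_neg]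
    rw [this]
  exact Summable.of_nat_of_neg (f := fun k : ℤ => w1 k ^ (-p)) hg hneg


lemma rpow_neg_antitone {a c p : ℝ} (ha : 0 < a) (hac : a ≤ c) (hp : 0 ≤ p) :
    c ^ (-p) ≤ a ^ (-p) := by
  rw [Real.rpow_neg (le_of_lt ha), Real.rpow_neg (le_of_lt (lt_of_lt_of_le ha hac))]
  exact inv_anti₀ (Real.rpow_pos_of_pos ha p) (Real.rpow_le_rpow (le_of_lt ha) hac hp)

/-- The dimensional constant `S`. -/
noncomputable def Sconst (b : ℕ) (s0 : ℝ) : ℝ := (∑' k : ℤ, w1 k ^ (-(2*s0/b))) ^ b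

lemma one_lt_p (hb : 1 ≤ b) {s0 : ℝ} (hs0 : (b:ℝ)/2 < s0) : 1 < 2*s0/b := by
  have hbpos : (0:ℝ) < b := by exact_mod_cast hb
  rw [lt_div_iff₀ hbpos]
  linarith

lemma one_le_Z (hb : 1 ≤ b) {s0 : ℝ} (hs0 : (b:ℝ)/2 < s0) :
    1 ≤ ∑' k : ℤ, w1 k ^ (-(2*s0/b)) := by
  have hsum := summable_w1 (one_lt_p hb hs0)
  have h0 : w1 (0:ℤ) ^ (-(2*s0/b)) = 1 := by
    have : w1 (0:ℤ) = 1 := by unfold w1; norm_num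
    rw [this, Real.one_rpow]
  calc (1:ℝ) = w1 (0:ℤ) ^ (-(2*s0/b)) := h0.symm
    _ ≤ ∑' k : ℤ, w1 k ^ (-(2*s0/b)) :=
        Summable.le_tsum hsum 0 (fun k _ => Real.rpow_nonneg (le_trans zero_le_one (one_le_w1 k)) _)

lemma one_le_Sconst (hb : 1 ≤ b) {s0 : ℝ} (hs0 : (b:ℝ)/2 < s0) : 1 ≤ Sconst b s0 :=
  one_le_pow₀ (one_le_Z hb hs0)

lemma sum_wt_neg_le (hb : 1 ≤ b) {s0 : ℝ} (hs0 : (b:ℝ)/2 < s0) (A : Finset (Fin b → ℤ)) :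
    ∑ m ∈ A, (wt m : ℝ) ^ (-(2*s0)) ≤ Sconst b s0 := by
  set p : ℝ := 2*s0/b with hpdef
  have hp : 1 < p := one_lt_p hb hs0
  have hp0 : 0 ≤ p := le_of_lt (lt_trans one_pos hp)
  have hbpos : (0:ℝ) < b := by exact_mod_cast hb
  have hb' : (b:ℝ) ≠ 0 := ne_of_gt hbpos
  have hpb : p * b = 2*s0 := by rw [hpdef]; field_simp
  have hterm : ∀ m : Fin b → ℤ, (wt m : ℝ) ^ (-(2*s0)) ≤ ∏ t : Fin b, w1 (m t) ^ (-p) := by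
    intro m
    have h1 : (wt m : ℝ) ^ (-(2*s0)) = ∏ t : Fin b, (wt m : ℝ) ^ (-p) := by
      rw [Finset.prod_const, ← Real.rpow_natCast ((wt m : ℝ) ^ (-p)) _, ← Real.rpow_mul (le_of_lt (wt_pos m))]
      congr 1
      rw [Finset.card_univ, Fintype.card_fin]
      rw [neg_mul, hpb]
    rw [h1]
    apply Finset.prod_le_prod
    · intro t _; exact Real.rpow_nonneg (le_of_lt (wt_pos m)) _
    · intro t _
      exact rpow_neg_antitone (lt_of_lt_of_le one_pos (one_le_w1 (m t))) (wt_coord m t) hp0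
  calc ∑ m ∈ A, (wt m : ℝ) ^ (-(2*s0)) ≤ ∑ m ∈ A, ∏ t : Fin b, w1 (m t) ^ (-p) :=
        Finset.sum_le_sum fun m _ => hterm m
    _ ≤ ∑ m ∈ Fintype.piFinset (fun t => A.image (fun m => m t)), ∏ t : Fin b, w1 (m t) ^ (-p) := by
        apply Finset.sum_le_sum_of_subset_of_nonneg
        · intro m hm
          rw [Fintype.mem_piFinset]
          intro t
          exact Finset.mem_image_of_mem _ hm
        · intro m _ _
          exact Finset.prod_nonneg fun t _ => Real.rpow_nonneg (le_trans zero_le_one (one_le_w1 _)) _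
    _ = ∏ t : Fin b, ∑ k ∈ A.image (fun m => m t), w1 k ^ (-p) := by
        rw [Finset.prod_univ_sum]
    _ ≤ ∏ t : Fin b, ∑' k : ℤ, w1 k ^ (-p) := by
        apply Finset.prod_le_prod
        · intro t _
          exact Finset.sum_nonneg fun k _ => Real.rpow_nonneg (le_trans zero_le_one (one_le_w1 _)) _
        · intro t _
          exact Summable.sum_le_tsum _ (fun k _ => Real.rpow_nonneg (le_trans zero_le_one (one_le_w1 _)) _)
            (summable_w1 hp)
    _ = Sconst b s0 := by
        rw [Finset.prod_const, Finset.card_univ, Fintype.card_fin]; rfl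



/-- The constant `E` controlling the first region. -/
noncomputable def Econst (s0 : ℝ) : ℝ := Real.exp (s0 / (2*s0 - 1))

lemma one_le_Econst {s0 : ℝ} (h : 1/2 < s0) : 1 ≤ Econst s0 := by
  apply Real.one_le_exp
  have h1 : (0:ℝ) < 2*s0 - 1 := by linarith
  positivity

lemma rpow_sq (x a : ℝ) (hx : 0 < x) : (x ^ a) ^ 2 = x ^ (2*a) := by
  rw [sq, ← Real.rpow_add hx]; ring_nf

lemma wt_rpow_nonneg (n : Fin b → ℤ) (a : ℝ) : 0 ≤ (wt n : ℝ) ^ a :=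
  Real.rpow_nonneg (le_of_lt (wt_pos n)) a

lemma wt_neg_mul_pos (n : Fin b → ℤ) (a : ℝ) : (wt n : ℝ) ^ (-a) * (wt n : ℝ) ^ a = 1 := by
  rw [← Real.rpow_add (wt_pos n)]; simp

/-- region 1 pointwise bound -/
lemma region1_bound {s0 s : ℝ} (h0 : 1/2 < s0) (hs : s0 ≤ s) (n m : Fin b → ℤ)
    (h : 2*s*(wt m : ℝ) < (wt n : ℝ)) :
    (wt n : ℝ) ^ s ≤ Econst s0 * (wt (n - m) : ℝ) ^ s := by
  have hs2 : (1:ℝ)/2 < s := lt_of_lt_of_le h0 hs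
  have hspos : (0:ℝ) < s := by linarith
  have h2s1 : (0:ℝ) < 2*s - 1 := by linarith
  have htri := wt_triangle n m
  have hv : (wt n : ℝ) * (2*s - 1) / (2*s) < (wt (n-m) : ℝ) := by
    have hm : (wt m : ℝ) < (wt n : ℝ) / (2*s) := by
      rw [lt_div_iff₀ (by linarith : (0:ℝ) < 2*s)]
      linarith [mul_comm (2*s) (wt m : ℝ)]
    have : (wt n : ℝ) - (wt n : ℝ)/(2*s) < (wt (n-m) : ℝ) := by linarith
    calc (wt n : ℝ) * (2*s-1)/(2*s) = (wt n : ℝ) - (wt n : ℝ)/(2*s) := by field_simp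
      _ < (wt (n-m) : ℝ) := this
  have hkey : (wt n : ℝ) ≤ (2*s/(2*s-1)) * (wt (n-m) : ℝ) := by
    rw [div_mul_eq_mul_div, le_div_iff₀ h2s1]
    have := hv
    rw [div_lt_iff₀ (by linarith : (0:ℝ) < 2*s)] at this
    nlinarith [wt_pos (n - m)]
  calc (wt n : ℝ) ^ s ≤ ((2*s/(2*s-1)) * (wt (n-m) : ℝ)) ^ s := by
        apply Real.rpow_le_rpow (le_of_lt (wt_pos n)) hkey (le_of_lt hspos)
    _ = (2*s/(2*s-1)) ^ s * (wt (n-m) : ℝ) ^ s := by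
        apply Real.mul_rpow (by positivity) (le_of_lt (wt_pos _))
    _ ≤ Econst s0 * (wt (n - m) : ℝ) ^ s := by
        apply mul_le_mul_of_nonneg_right _ (wt_rpow_nonneg _ _)
        have hx : (0:ℝ) < 1/(2*s-1) := by positivity
        have heq : 2*s/(2*s-1) = 1 + 1/(2*s-1) := by field_simp; ring
        rw [heq]
        calc (1 + 1/(2*s-1)) ^ s ≤ (Real.exp (1/(2*s-1))) ^ s := by
              apply Real.rpow_le_rpow (by positivity)
                (by linarith [Real.add_one_le_exp (1/(2*s-1))]) (le_of_lt hspos)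
          _ = Real.exp (1/(2*s-1) * s) := (Real.exp_mul _ _).symm
          _ ≤ Econst s0 := by
              unfold Econst
              apply Real.exp_le_exp.mpr
              rw [div_mul_eq_mul_div, one_mul, div_le_div_iff₀ h2s1 (by linarith : (0:ℝ) < 2*s0-1)]
              nlinarith

lemma sum_shift_le (q : (Fin b → ℤ) → ℝ) (hq : ∀ k, 0 ≤ q k) (F2 : Finset (Fin b → ℤ))
    (hv : ∀ k ∉ F2, q k = 0) (G : Finset (Fin b → ℤ)) (m : Fin b → ℤ) :
    ∑ n ∈ G, q (n - m) ≤ ∑ k ∈ F2, q k := by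
  have h1 : ∑ n ∈ G, q (n - m) = ∑ k ∈ G.image (fun n => n - m), q k := by
    rw [Finset.sum_image]
    intro x _ y _ h
    have := congrArg (· + m) h
    simpa using this
  rw [h1]
  set A := G.image (fun n => n - m) with hA
  have h2 : ∑ k ∈ A ∩ F2, q k = ∑ k ∈ A, q k := by
    apply Finset.sum_subset (Finset.inter_subset_left)
    intro x hx hx2
    exact hv x (fun hf => hx2 (Finset.mem_inter.mpr ⟨hx, hf⟩))
  rw [← h2]
  exact Finset.sum_le_sum_of_subset_of_nonneg (Finset.inter_subset_right) (fun k _ _ => hq k)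

lemma conv_estimate (hb : 1 ≤ b) {s0 s : ℝ} (hs0 : (b:ℝ)/2 < s0) (hs : s0 ≤ s)
    (c1 c2 : (Fin b → ℤ) → ℝ) (h1 : ∀ m, 0 ≤ c1 m) (h2 : ∀ m, 0 ≤ c2 m)
    (F1 F2 : Finset (Fin b → ℤ)) (hv2 : ∀ m ∉ F2, c2 m = 0)
    (G : Finset (Fin b → ℤ)) :
    ∑ n ∈ G, (∑ m ∈ F1, c1 m * c2 (n - m))^2 * (wt n : ℝ) ^ (2*s) ≤
      2 * (Econst s0)^2 * Sconst b s0 *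
        ((∑ m ∈ F1, c1 m^2 * (wt m:ℝ)^(2*s0)) * (∑ m ∈ F2, c2 m^2 * (wt m:ℝ)^(2*s)))
      + 2 * ((2*s)^s)^2 * Sconst b s0 *
        ((∑ m ∈ F1, c1 m^2 * (wt m:ℝ)^(2*s)) * (∑ m ∈ F2, c2 m^2 * (wt m:ℝ)^(2*s0))) := by
  classical
  have hbR : (1:ℝ) ≤ b := by exact_mod_cast hb
  have h0 : (1:ℝ)/2 < s0 := by linarith
  have hspos : (0:ℝ) < s := by linarith
  have hE := one_le_Econst h0
  have hS := one_le_Sconst hb hs0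
  -- the weighted functions
  set g1 : (Fin b → ℤ) → ℝ := fun m => c1 m * (wt m : ℝ)^s0 with hg1
  set g1' : (Fin b → ℤ) → ℝ := fun m => c1 m * (wt m : ℝ)^s with hg1'
  set h2s : (Fin b → ℤ) → ℝ := fun m => c2 m * (wt m : ℝ)^s with hh2s
  set h2s0 : (Fin b → ℤ) → ℝ := fun m => c2 m * (wt m : ℝ)^s0 with hh2s0
  have hg1nn : ∀ m, 0 ≤ g1 m := fun m => mul_nonneg (h1 m) (wt_rpow_nonneg m _)
  have hg1'nn : ∀ m, 0 ≤ g1' m := fun m => mul_nonneg (h1 m) (wt_rpow_nonneg m _)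
  have hh2snn : ∀ m, 0 ≤ h2s m := fun m => mul_nonneg (h2 m) (wt_rpow_nonneg m _)
  have hh2s0nn : ∀ m, 0 ≤ h2s0 m := fun m => mul_nonneg (h2 m) (wt_rpow_nonneg m _)
  -- per-n splitting
  set P : (Fin b → ℤ) → (Fin b → ℤ) → Prop := fun n m => 2*s*(wt m : ℝ) < (wt n : ℝ) with hP
  set T1 : (Fin b → ℤ) → ℝ := fun n =>
    ∑ m ∈ F1.filter (P n), c1 m * c2 (n - m) * (wt n : ℝ)^s with hT1
  set T2 : (Fin b → ℤ) → ℝ := fun n =>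
    ∑ m ∈ F1.filter (fun m => ¬ P n m), c1 m * c2 (n - m) * (wt n : ℝ)^s with hT2
  have hT1nn : ∀ n, 0 ≤ T1 n := fun n => Finset.sum_nonneg fun m _ =>
    mul_nonneg (mul_nonneg (h1 m) (h2 _)) (wt_rpow_nonneg _ _)
  have hT2nn : ∀ n, 0 ≤ T2 n := fun n => Finset.sum_nonneg fun m _ =>
    mul_nonneg (mul_nonneg (h1 m) (h2 _)) (wt_rpow_nonneg _ _)
  have hsplit : ∀ n, (∑ m ∈ F1, c1 m * c2 (n - m))^2 * (wt n : ℝ) ^ (2*s)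
      = (T1 n + T2 n)^2 := by
    intro n
    have e1 : (∑ m ∈ F1, c1 m * c2 (n - m))^2 * (wt n : ℝ) ^ (2*s)
        = ((∑ m ∈ F1, c1 m * c2 (n - m)) * (wt n : ℝ)^s)^2 := by
      rw [mul_pow, rpow_sq _ _ (wt_pos n)]
    rw [e1]
    congr 1
    rw [Finset.sum_mul]
    rw [hT1, hT2]
    exact (Finset.sum_filter_add_sum_filter_not F1 (P n) _).symm
  -- region 1 bound
  set A1 : (Fin b → ℤ) → ℝ := fun n =>
    ∑ m ∈ F1, (wt m : ℝ)^(-s0) * (g1 m * h2s (n - m)) with hA1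
  have hT1le : ∀ n, T1 n ≤ Econst s0 * A1 n := by
    intro n
    rw [hT1, hA1, Finset.mul_sum]
    calc ∑ m ∈ F1.filter (P n), c1 m * c2 (n - m) * (wt n : ℝ)^s
        ≤ ∑ m ∈ F1.filter (P n), Econst s0 * ((wt m : ℝ)^(-s0) * (g1 m * h2s (n - m))) := by
          apply Finset.sum_le_sum
          intro m hm
          have hPm : P n m := (Finset.mem_filter.mp hm).2
          have hr := region1_bound h0 hs n m hPm
          calc c1 m * c2 (n - m) * (wt n : ℝ)^s
              ≤ c1 m * c2 (n - m) * (Econst s0 * (wt (n-m) : ℝ)^s) := by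
                apply mul_le_mul_of_nonneg_left hr (mul_nonneg (h1 m) (h2 _))
            _ = Econst s0 * ((wt m : ℝ)^(-s0) * (g1 m * h2s (n - m))) := by
                rw [hg1, hh2s]
                have : (wt m : ℝ)^(-s0) * (c1 m * (wt m : ℝ)^s0 * (c2 (n-m) * (wt (n-m) : ℝ)^s))
                    = ((wt m : ℝ)^(-s0) * (wt m : ℝ)^s0) * (c1 m * c2 (n-m) * (wt (n-m) : ℝ)^s) := by
                  ring
                rw [this, wt_neg_mul_pos]
                ring
      _ ≤ ∑ m ∈ F1, Econst s0 * ((wt m : ℝ)^(-s0) * (g1 m * h2s (n - m))) := by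
          apply Finset.sum_le_sum_of_subset_of_nonneg (Finset.filter_subset _ _)
          intro m _ _
          have : 0 ≤ (wt m : ℝ)^(-s0) * (g1 m * h2s (n - m)) :=
            mul_nonneg (wt_rpow_nonneg _ _) (mul_nonneg (hg1nn m) (hh2snn _))
          positivity
  have hA1sq : ∀ n, (A1 n)^2 ≤ Sconst b s0 * ∑ m ∈ F1, (g1 m)^2 * (h2s (n - m))^2 := by
    intro n
    have hcs := Finset.sum_mul_sq_le_sq_mul_sq F1 (fun m => (wt m : ℝ)^(-s0))
      (fun m => g1 m * h2s (n - m))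
    rw [hA1]
    calc (∑ m ∈ F1, (wt m : ℝ)^(-s0) * (g1 m * h2s (n - m)))^2
        ≤ (∑ m ∈ F1, ((wt m : ℝ)^(-s0))^2) * ∑ m ∈ F1, (g1 m * h2s (n - m))^2 := hcs
      _ ≤ Sconst b s0 * ∑ m ∈ F1, (g1 m)^2 * (h2s (n - m))^2 := by
          apply mul_le_mul
          · calc ∑ m ∈ F1, ((wt m : ℝ)^(-s0))^2 = ∑ m ∈ F1, (wt m : ℝ)^(-(2*s0)) := by
                  apply Finset.sum_congr rfl
                  intro m _
                  rw [rpow_sq _ _ (wt_pos m)]; ring_nf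
              _ ≤ Sconst b s0 := sum_wt_neg_le hb hs0 F1
          · apply le_of_eq; apply Finset.sum_congr rfl; intro m _; rw [mul_pow]
          · exact Finset.sum_nonneg fun m _ => sq_nonneg _
          · linarith
  -- region 2 bound
  set A2 : (Fin b → ℤ) → ℝ := fun n =>
    ∑ m ∈ F1, (wt (n - m) : ℝ)^(-s0) * (g1' m * h2s0 (n - m)) with hA2
  have hT2le : ∀ n, T2 n ≤ (2*s)^s * A2 n := by
    intro n
    rw [hT2, hA2, Finset.mul_sum]
    calc ∑ m ∈ F1.filter (fun m => ¬ P n m), c1 m * c2 (n - m) * (wt n : ℝ)^s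
        ≤ ∑ m ∈ F1.filter (fun m => ¬ P n m),
            (2*s)^s * ((wt (n-m) : ℝ)^(-s0) * (g1' m * h2s0 (n - m))) := by
          apply Finset.sum_le_sum
          intro m hm
          have hPm0 : ¬ P n m := (Finset.mem_filter.mp hm).2
          have hPm : (wt n : ℝ) ≤ 2*s*(wt m : ℝ) := not_lt.mp (by simpa [hP] using hPm0)
          have hr : (wt n : ℝ)^s ≤ (2*s)^s * (wt m : ℝ)^s := by
            calc (wt n : ℝ)^s ≤ ((2*s) * (wt m : ℝ))^s :=
                  Real.rpow_le_rpow (le_of_lt (wt_pos n)) hPm (le_of_lt hspos)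
              _ = (2*s)^s * (wt m : ℝ)^s :=
                  Real.mul_rpow (by linarith) (le_of_lt (wt_pos m))
          calc c1 m * c2 (n - m) * (wt n : ℝ)^s
              ≤ c1 m * c2 (n - m) * ((2*s)^s * (wt m : ℝ)^s) := by
                apply mul_le_mul_of_nonneg_left hr (mul_nonneg (h1 m) (h2 _))
            _ = (2*s)^s * ((wt (n-m) : ℝ)^(-s0) * (g1' m * h2s0 (n - m))) := by
                rw [hg1', hh2s0]
                have : (wt (n-m) : ℝ)^(-s0) * (c1 m * (wt m : ℝ)^s * (c2 (n-m) * (wt (n-m) : ℝ)^s0))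
                    = ((wt (n-m) : ℝ)^(-s0) * (wt (n-m) : ℝ)^s0) * (c1 m * c2 (n-m) * (wt m : ℝ)^s) := by
                  ring
                rw [this, wt_neg_mul_pos]
                ring
      _ ≤ ∑ m ∈ F1, (2*s)^s * ((wt (n-m) : ℝ)^(-s0) * (g1' m * h2s0 (n - m))) := by
          apply Finset.sum_le_sum_of_subset_of_nonneg (Finset.filter_subset _ _)
          intro m _ _
          have h2spos : (0:ℝ) ≤ (2*s)^s := Real.rpow_nonneg (by linarith) s
          have : 0 ≤ (wt (n-m) : ℝ)^(-s0) * (g1' m * h2s0 (n - m)) :=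
            mul_nonneg (wt_rpow_nonneg _ _) (mul_nonneg (hg1'nn m) (hh2s0nn _))
          positivity
  have hA2sq : ∀ n, (A2 n)^2 ≤ Sconst b s0 * ∑ m ∈ F1, (g1' m)^2 * (h2s0 (n - m))^2 := by
    intro n
    have hcs := Finset.sum_mul_sq_le_sq_mul_sq F1 (fun m => (wt (n - m) : ℝ)^(-s0))
      (fun m => g1' m * h2s0 (n - m))
    rw [hA2]
    calc (∑ m ∈ F1, (wt (n-m) : ℝ)^(-s0) * (g1' m * h2s0 (n - m)))^2
        ≤ (∑ m ∈ F1, ((wt (n-m) : ℝ)^(-s0))^2) * ∑ m ∈ F1, (g1' m * h2s0 (n - m))^2 := hcs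
      _ ≤ Sconst b s0 * ∑ m ∈ F1, (g1' m)^2 * (h2s0 (n - m))^2 := by
          apply mul_le_mul
          · calc ∑ m ∈ F1, ((wt (n-m) : ℝ)^(-s0))^2
                = ∑ m ∈ F1, (wt (n-m) : ℝ)^(-(2*s0)) := by
                  apply Finset.sum_congr rfl
                  intro m _
                  rw [rpow_sq _ _ (wt_pos (n-m))]; ring_nf
              _ = ∑ k ∈ F1.image (fun m => n - m), (wt k : ℝ)^(-(2*s0)) := by
                  rw [Finset.sum_image]
                  intro x _ y _ hxy
                  have := congrArg (fun z => n - z) hxy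
                  simpa using this
              _ ≤ Sconst b s0 := sum_wt_neg_le hb hs0 _
          · apply le_of_eq; apply Finset.sum_congr rfl; intro m _; rw [mul_pow]
          · exact Finset.sum_nonneg fun m _ => sq_nonneg _
          · linarith
  -- assemble
  have key : ∀ n, (∑ m ∈ F1, c1 m * c2 (n - m))^2 * (wt n : ℝ) ^ (2*s)
      ≤ 2 * (Econst s0)^2 * (Sconst b s0 * ∑ m ∈ F1, (g1 m)^2 * (h2s (n - m))^2)
        + 2 * ((2*s)^s)^2 * (Sconst b s0 * ∑ m ∈ F1, (g1' m)^2 * (h2s0 (n - m))^2) := by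
    intro n
    rw [hsplit n]
    have e2 : (T1 n + T2 n)^2 ≤ 2 * (T1 n)^2 + 2 * (T2 n)^2 := by nlinarith [sq_nonneg (T1 n - T2 n)]
    have e3 : (T1 n)^2 ≤ (Econst s0)^2 * (A1 n)^2 := by
      rw [← mul_pow]
      apply pow_le_pow_left₀ (hT1nn n) (hT1le n)
    have e4 : (T2 n)^2 ≤ ((2*s)^s)^2 * (A2 n)^2 := by
      rw [← mul_pow]
      apply pow_le_pow_left₀ (hT2nn n) (hT2le n)
    have e5 := hA1sq n
    have e6 := hA2sq n
    have hE2 : (0:ℝ) ≤ (Econst s0)^2 := sq_nonneg _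
    have h2s2 : (0:ℝ) ≤ ((2*s)^s)^2 := sq_nonneg _
    nlinarith [mul_le_mul_of_nonneg_left e5 hE2, mul_le_mul_of_nonneg_left e6 h2s2]
  calc ∑ n ∈ G, (∑ m ∈ F1, c1 m * c2 (n - m))^2 * (wt n : ℝ) ^ (2*s)
      ≤ ∑ n ∈ G, (2 * (Econst s0)^2 * (Sconst b s0 * ∑ m ∈ F1, (g1 m)^2 * (h2s (n - m))^2)
        + 2 * ((2*s)^s)^2 * (Sconst b s0 * ∑ m ∈ F1, (g1' m)^2 * (h2s0 (n - m))^2)) :=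
        Finset.sum_le_sum fun n _ => key n
    _ = 2 * (Econst s0)^2 * Sconst b s0 * (∑ n ∈ G, ∑ m ∈ F1, (g1 m)^2 * (h2s (n - m))^2)
        + 2 * ((2*s)^s)^2 * Sconst b s0 * (∑ n ∈ G, ∑ m ∈ F1, (g1' m)^2 * (h2s0 (n - m))^2) := by
        have e : ∀ n, 2 * (Econst s0)^2 * (Sconst b s0 * ∑ m ∈ F1, (g1 m)^2 * (h2s (n - m))^2)
            + 2 * ((2*s)^s)^2 * (Sconst b s0 * ∑ m ∈ F1, (g1' m)^2 * (h2s0 (n - m))^2)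
            = (2 * (Econst s0)^2 * Sconst b s0) * (∑ m ∈ F1, (g1 m)^2 * (h2s (n - m))^2)
            + (2 * ((2*s)^s)^2 * Sconst b s0) * (∑ m ∈ F1, (g1' m)^2 * (h2s0 (n - m))^2) := by
          intro n; ring
        simp only [e]
        rw [Finset.sum_add_distrib, ← Finset.mul_sum, ← Finset.mul_sum]
    _ ≤ 2 * (Econst s0)^2 * Sconst b s0 *
          ((∑ m ∈ F1, c1 m^2 * (wt m:ℝ)^(2*s0)) * (∑ m ∈ F2, c2 m^2 * (wt m:ℝ)^(2*s)))
        + 2 * ((2*s)^s)^2 * Sconst b s0 *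
          ((∑ m ∈ F1, c1 m^2 * (wt m:ℝ)^(2*s)) * (∑ m ∈ F2, c2 m^2 * (wt m:ℝ)^(2*s0))) := by
        have hc1 : (0:ℝ) ≤ 2 * (Econst s0)^2 * Sconst b s0 := by positivity
        have hc2 : (0:ℝ) ≤ 2 * ((2*s)^s)^2 * Sconst b s0 := by positivity
        apply add_le_add
        · apply mul_le_mul_of_nonneg_left _ hc1
          rw [Finset.sum_comm]
          calc ∑ m ∈ F1, ∑ n ∈ G, (g1 m)^2 * (h2s (n - m))^2
              = ∑ m ∈ F1, (g1 m)^2 * ∑ n ∈ G, (h2s (n - m))^2 := by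
                apply Finset.sum_congr rfl; intro m _; rw [Finset.mul_sum]
            _ ≤ ∑ m ∈ F1, (g1 m)^2 * ∑ k ∈ F2, (h2s k)^2 := by
                apply Finset.sum_le_sum
                intro m _
                apply mul_le_mul_of_nonneg_left _ (sq_nonneg _)
                apply sum_shift_le (fun k => (h2s k)^2) (fun k => sq_nonneg _) F2
                  (fun k hk => by rw [hh2s]; simp [hv2 k hk]) G m
            _ = (∑ m ∈ F1, c1 m^2 * (wt m:ℝ)^(2*s0)) * (∑ m ∈ F2, c2 m^2 * (wt m:ℝ)^(2*s)) := by
                rw [← Finset.sum_mul]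
                congr 1
                · apply Finset.sum_congr rfl; intro m _
                  rw [hg1]; rw [mul_pow, rpow_sq _ _ (wt_pos m)]
                · apply Finset.sum_congr rfl; intro k _
                  rw [hh2s]; rw [mul_pow, rpow_sq _ _ (wt_pos k)]
        · apply mul_le_mul_of_nonneg_left _ hc2
          rw [Finset.sum_comm]
          calc ∑ m ∈ F1, ∑ n ∈ G, (g1' m)^2 * (h2s0 (n - m))^2
              = ∑ m ∈ F1, (g1' m)^2 * ∑ n ∈ G, (h2s0 (n - m))^2 := by
                apply Finset.sum_congr rfl; intro m _; rw [Finset.mul_sum]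
            _ ≤ ∑ m ∈ F1, (g1' m)^2 * ∑ k ∈ F2, (h2s0 k)^2 := by
                apply Finset.sum_le_sum
                intro m _
                apply mul_le_mul_of_nonneg_left _ (sq_nonneg _)
                apply sum_shift_le (fun k => (h2s0 k)^2) (fun k => sq_nonneg _) F2
                  (fun k hk => by rw [hh2s0]; simp [hv2 k hk]) G m
            _ = (∑ m ∈ F1, c1 m^2 * (wt m:ℝ)^(2*s)) * (∑ m ∈ F2, c2 m^2 * (wt m:ℝ)^(2*s0)) := by
                rw [← Finset.sum_mul]
                congr 1
                · apply Finset.sum_congr rfl; intro m _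
                  rw [hg1']; rw [mul_pow, rpow_sq _ _ (wt_pos m)]
                · apply Finset.sum_congr rfl; intro k _
                  rw [hh2s0]; rw [mul_pow, rpow_sq _ _ (wt_pos k)]


noncomputable def blockVec (B C : Finset (Site b)) (M : Site b → Site b → ℂ)
    (i i' : Fin b → ℤ) : EuclideanSpace ℂ (Bool × Bool) :=
  WithLp.toLp 2 (fun p : Bool × Bool => if (i, p.1) ∈ C ∧ (i', p.2) ∈ B then M (i, p.1) (i', p.2) else 0)

lemma blockNorm_eq (B C : Finset (Site b)) (M : Site b → Site b → ℂ) (i i' : Fin b → ℤ) :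
    (blockNorm B C M i i' : ℝ) = ‖blockVec B C M i i'‖ := by
  rw [EuclideanSpace.norm_eq, blockNorm, Real.coe_sqrt]
  congr 1
  rw [Fintype.sum_prod_type]
  push_cast
  apply Finset.sum_congr rfl
  intro a _
  apply Finset.sum_congr rfl
  intro a' _
  by_cases h : (i, a) ∈ C ∧ (i', a') ∈ B
  · simp [blockVec, h]
  · simp [blockVec, h]

lemma blockNorm_sq (B C : Finset (Site b)) (M : Site b → Site b → ℂ) (i i' : Fin b → ℤ) :
    (blockNorm B C M i i' : ℝ)^2 = ∑ a : Bool, ∑ a' : Bool,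
      if (i, a) ∈ C ∧ (i', a') ∈ B then ‖M (i, a) (i', a')‖^2 else 0 := by
  rw [blockNorm, Real.coe_sqrt, Real.sq_sqrt]
  · push_cast
    apply Finset.sum_congr rfl; intro a _
    apply Finset.sum_congr rfl; intro a' _
    by_cases h : (i, a) ∈ C ∧ (i', a') ∈ B <;> simp [h]
  · positivity

lemma fiber_sum {M : Type*} [AddCommMonoid M] (C : Finset (Site b)) (j : Fin b → ℤ)
    (f : Site b → M) :
    ∑ q ∈ C.filter (fun q => q.1 = j), f q
      = ∑ a'' : Bool, if (j, a'') ∈ C then f (j, a'') else 0 := by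
  classical
  have h1 : ∑ a'' : Bool, (if (j, a'') ∈ C then f (j, a'') else 0)
      = ∑ a'' ∈ Finset.univ.filter (fun a'' => (j, a'') ∈ C), f (j, a'') := by
    rw [Finset.sum_filter]
  rw [h1]
  apply Finset.sum_nbij' (fun q => q.2) (fun a'' => (j, a''))
  · intro q hq
    obtain ⟨hqC, hqj⟩ := Finset.mem_filter.mp hq
    simp only [Finset.mem_filter, Finset.mem_univ, true_and]
    have : (j, q.2) = q := by
      ext <;> simp [hqj.symm]
    rwa [this]
  · intro a'' ha''
    have h2 : (j, a'') ∈ C := (Finset.mem_filter.mp ha'').2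
    exact Finset.mem_filter.mpr ⟨h2, rfl⟩
  · intro q hq
    have hqj : q.1 = j := (Finset.mem_filter.mp hq).2
    ext <;> simp [hqj.symm]
  · intro a'' _
    rfl
  · intro q hq
    have hqj : q.1 = j := (Finset.mem_filter.mp hq).2
    congr 1
    ext <;> simp [hqj.symm]

lemma norm_sum_mul_sq_le {α : Type*} (t : Finset α) (x y : α → ℂ) :
    ‖∑ q ∈ t, x q * y q‖^2 ≤ (∑ q ∈ t, ‖x q‖^2) * (∑ q ∈ t, ‖y q‖^2) := by
  have h1 : ‖∑ q ∈ t, x q * y q‖ ≤ ∑ q ∈ t, ‖x q‖ * ‖y q‖ := by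
    calc ‖∑ q ∈ t, x q * y q‖ ≤ ∑ q ∈ t, ‖x q * y q‖ := norm_sum_le _ _
      _ = ∑ q ∈ t, ‖x q‖ * ‖y q‖ := by simp [norm_mul]
  calc ‖∑ q ∈ t, x q * y q‖^2 ≤ (∑ q ∈ t, ‖x q‖ * ‖y q‖)^2 :=
        pow_le_pow_left₀ (norm_nonneg _) h1 2
    _ ≤ (∑ q ∈ t, ‖x q‖^2) * (∑ q ∈ t, ‖y q‖^2) := Finset.sum_mul_sq_le_sq_mul_sq t _ _

lemma blockNorm_nonneg (B C : Finset (Site b)) (M : Site b → Site b → ℂ) (i i' : Fin b → ℤ) :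
    (0:ℝ) ≤ (blockNorm B C M i i' : ℝ) := NNReal.coe_nonneg _

lemma blockNorm_mMul_le (B C D : Finset (Site b)) (M1 M2 : Site b → Site b → ℂ)
    (i i' : Fin b → ℤ) :
    (blockNorm B D (mMul C M1 M2) i i' : ℝ) ≤
      ∑ j ∈ C.image Prod.fst, (blockNorm C D M1 i j : ℝ) * (blockNorm B C M2 j i' : ℝ) := by
  classical
  rw [blockNorm_eq]
  set W : (Fin b → ℤ) → EuclideanSpace ℂ (Bool × Bool) := fun j => WithLp.toLp 2 (fun p : Bool × Bool =>
    if (i, p.1) ∈ D ∧ (i', p.2) ∈ B then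
      ∑ q ∈ C.filter (fun q => q.1 = j), M1 (i, p.1) q * M2 q (i', p.2) else 0) with hW
  have hdecomp : blockVec B D (mMul C M1 M2) i i' = ∑ j ∈ C.image Prod.fst, W j := by
    ext p
    rw [WithLp.ofLp_sum, Finset.sum_apply]
    show (if (i, p.1) ∈ D ∧ (i', p.2) ∈ B then mMul C M1 M2 (i, p.1) (i', p.2) else 0) = _
    by_cases h : (i, p.1) ∈ D ∧ (i', p.2) ∈ B
    · simp only [h, if_true, hW, mMul, PiLp.toLp_apply]
      exact (Finset.sum_fiberwise_of_maps_to (fun q hq => Finset.mem_image_of_mem Prod.fst hq)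
        (fun q => M1 (i, p.1) q * M2 q (i', p.2))).symm
    · rw [if_neg h]
      symm
      apply Finset.sum_eq_zero
      intro j _
      simp only [hW]
      exact if_neg h
  rw [hdecomp]
  calc ‖∑ j ∈ C.image Prod.fst, W j‖ ≤ ∑ j ∈ C.image Prod.fst, ‖W j‖ := norm_sum_le _ _
    _ ≤ ∑ j ∈ C.image Prod.fst, (blockNorm C D M1 i j : ℝ) * (blockNorm B C M2 j i' : ℝ) := by
        apply Finset.sum_le_sum
        intro j _
        -- bound ‖W j‖
        have hsq : ∑ p : Bool × Bool, ‖W j p‖^2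
            ≤ (blockNorm C D M1 i j : ℝ)^2 * (blockNorm B C M2 j i' : ℝ)^2 := by
          rw [blockNorm_sq, blockNorm_sq, Fintype.sum_prod_type]
          have hfact : (∑ a : Bool, ∑ a' : Bool, if (i, a) ∈ D ∧ (j, a') ∈ C then ‖M1 (i, a) (j, a')‖ ^ 2 else 0) *
                ∑ a : Bool, ∑ a' : Bool, (if (j, a) ∈ C ∧ (i', a') ∈ B then ‖M2 (j, a) (i', a')‖ ^ 2 else 0)
              = ∑ a : Bool, ∑ a' : Bool,
                  (∑ a'' : Bool, if (i, a) ∈ D ∧ (j, a'') ∈ C then ‖M1 (i, a) (j, a'')‖ ^ 2 else 0) *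
                  (∑ a'' : Bool, if (j, a'') ∈ C ∧ (i', a') ∈ B then ‖M2 (j, a'') (i', a')‖ ^ 2 else 0) := by
            rw [Finset.sum_comm (f := fun a a' => if (j, a) ∈ C ∧ (i', a') ∈ B then ‖M2 (j, a) (i', a')‖ ^ 2 else 0)]
            rw [Finset.sum_mul_sum]
          rw [hfact]
          apply Finset.sum_le_sum
          intro a _
          apply Finset.sum_le_sum
          intro a' _
          by_cases h : (i, a) ∈ D ∧ (i', a') ∈ B
          · have hWval : ‖W j (a, a')‖^2
                = ‖∑ q ∈ C.filter (fun q => q.1 = j), M1 (i, a) q * M2 q (i', a')‖^2 := by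
              rw [hW]; simp only [h.1, h.2, and_self, if_true, PiLp.toLp_apply]
            rw [hWval]
            calc ‖∑ q ∈ C.filter (fun q => q.1 = j), M1 (i, a) q * M2 q (i', a')‖^2
                ≤ (∑ q ∈ C.filter (fun q => q.1 = j), ‖M1 (i, a) q‖^2)
                  * (∑ q ∈ C.filter (fun q => q.1 = j), ‖M2 q (i', a')‖^2) :=
                  norm_sum_mul_sq_le _ _ _
              _ = (∑ a'' : Bool, if (i, a) ∈ D ∧ (j, a'') ∈ C then ‖M1 (i, a) (j, a'')‖^2 else 0)
                  * (∑ a'' : Bool, if (j, a'') ∈ C ∧ (i', a') ∈ B then ‖M2 (j, a'') (i', a')‖^2 else 0) := by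
                  congr 1
                  · rw [fiber_sum C j (fun q => ‖M1 (i, a) q‖^2)]
                    apply Finset.sum_congr rfl
                    intro a'' _
                    by_cases hc : (j, a'') ∈ C <;> simp [hc, h.1]
                  · rw [fiber_sum C j (fun q => ‖M2 q (i', a')‖^2)]
                    apply Finset.sum_congr rfl
                    intro a'' _
                    by_cases hc : (j, a'') ∈ C <;> simp [hc, h.2]
          · have hWval : W j (a, a') = 0 := by rw [hW]; simp only [h, if_false, PiLp.toLp_apply]
            rw [hWval]
            simp only [norm_zero]
            rw [zero_pow (by norm_num)]
            apply mul_nonneg <;>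
              exact Finset.sum_nonneg fun a'' _ => by positivity
        have h1 : ‖W j‖ = Real.sqrt (∑ p : Bool × Bool, ‖W j p‖^2) := EuclideanSpace.norm_eq _
        rw [h1]
        calc Real.sqrt (∑ p : Bool × Bool, ‖W j p‖^2)
            ≤ Real.sqrt ((blockNorm C D M1 i j : ℝ)^2 * (blockNorm B C M2 j i' : ℝ)^2) :=
              Real.sqrt_le_sqrt hsq
          _ = (blockNorm C D M1 i j : ℝ) * (blockNorm B C M2 j i' : ℝ) := by
              rw [← mul_pow, Real.sqrt_sq (by positivity)]

lemma sum_le_of_vanishing {α : Type*} [DecidableEq α] (q : α → ℝ) (hq : ∀ k, 0 ≤ q k)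
    (F : Finset α) (hv : ∀ k ∉ F, q k = 0) (A : Finset α) :
    ∑ k ∈ A, q k ≤ ∑ k ∈ F, q k := by
  have h2 : ∑ k ∈ A ∩ F, q k = ∑ k ∈ A, q k := by
    apply Finset.sum_subset (Finset.inter_subset_left)
    intro x hx hx2
    exact hv x (fun hf => hx2 (Finset.mem_inter.mpr ⟨hx, hf⟩))
  rw [← h2]
  exact Finset.sum_le_sum_of_subset_of_nonneg (Finset.inter_subset_right) (fun k _ _ => hq k)

lemma decayCoef_zero (B C : Finset (Site b)) (M : Site b → Site b → ℂ) (n : Fin b → ℤ)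
    (hn : n ∉ ((C.image Prod.fst) ×ˢ (B.image Prod.fst)).image (fun p => p.1 - p.2)) :
    decayCoef B C M n = 0 := by
  rw [decayCoef]
  have : (((C.image Prod.fst) ×ˢ (B.image Prod.fst)).filter fun p => p.1 - p.2 = n) = ∅ := by
    rw [Finset.filter_eq_empty_iff]
    intro p hp hpn
    exact hn (Finset.mem_image.mpr ⟨p, hp, hpn⟩)
  rw [this, Finset.sup_empty]
  rfl

lemma decayCoef_mMul_le (B C D : Finset (Site b)) (M1 M2 : Site b → Site b → ℂ)
    (n : Fin b → ℤ) :
    (decayCoef B D (mMul C M1 M2) n : ℝ) ≤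
      ∑ m ∈ ((D.image Prod.fst) ×ˢ (C.image Prod.fst)).image (fun p => p.1 - p.2),
        (decayCoef C D M1 m : ℝ) * (decayCoef B C M2 (n - m) : ℝ) := by
  classical
  set N1 := ((D.image Prod.fst) ×ˢ (C.image Prod.fst)).image (fun p => p.1 - p.2) with hN1
  have hRHSnn : ∀ m, 0 ≤ (decayCoef C D M1 m : ℝ) * (decayCoef B C M2 (n - m) : ℝ) :=
    fun m => mul_nonneg (NNReal.coe_nonneg _) (NNReal.coe_nonneg _)
  -- reduce to NNReal sup bound
  have hkey : ∀ p ∈ (((D.image Prod.fst) ×ˢ (B.image Prod.fst)).filter fun p => p.1 - p.2 = n),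
      (blockNorm B D (mMul C M1 M2) p.1 p.2 : ℝ) ≤
        ∑ m ∈ N1, (decayCoef C D M1 m : ℝ) * (decayCoef B C M2 (n - m) : ℝ) := by
    intro p hp
    obtain ⟨hpmem, hpn⟩ := Finset.mem_filter.mp hp
    obtain ⟨hi, hi'⟩ := Finset.mem_product.mp hpmem
    calc (blockNorm B D (mMul C M1 M2) p.1 p.2 : ℝ)
        ≤ ∑ j ∈ C.image Prod.fst, (blockNorm C D M1 p.1 j : ℝ) * (blockNorm B C M2 j p.2 : ℝ) :=
          blockNorm_mMul_le B C D M1 M2 p.1 p.2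
      _ ≤ ∑ j ∈ C.image Prod.fst,
            (decayCoef C D M1 (p.1 - j) : ℝ) * (decayCoef B C M2 (n - (p.1 - j)) : ℝ) := by
          apply Finset.sum_le_sum
          intro j hj
          have hb1 : blockNorm C D M1 p.1 j ≤ decayCoef C D M1 (p.1 - j) := by
            apply Finset.le_sup (f := fun p' => blockNorm C D M1 p'.1 p'.2)
              (b := ((p.1 : Fin b → ℤ), j))
            exact Finset.mem_filter.mpr ⟨Finset.mem_product.mpr ⟨hi, hj⟩, rfl⟩
          have hb2 : blockNorm B C M2 j p.2 ≤ decayCoef B C M2 (n - (p.1 - j)) := by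
            have heq : n - (p.1 - j) = j - p.2 := by
              rw [← hpn]; abel
            rw [heq]
            apply Finset.le_sup (f := fun p' => blockNorm B C M2 p'.1 p'.2)
              (b := (j, (p.2 : Fin b → ℤ)))
            exact Finset.mem_filter.mpr ⟨Finset.mem_product.mpr ⟨hj, hi'⟩, rfl⟩
          exact mul_le_mul hb1 hb2 (NNReal.coe_nonneg _) (NNReal.coe_nonneg _)
      _ = ∑ m ∈ (C.image Prod.fst).image (fun j => p.1 - j),
            (decayCoef C D M1 m : ℝ) * (decayCoef B C M2 (n - m) : ℝ) := by
          refine (Finset.sum_image (s := C.image Prod.fst) (g := fun j => p.1 - j)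
            (f := fun m => (decayCoef C D M1 m : ℝ) * (decayCoef B C M2 (n - m) : ℝ)) ?_).symm
          intro x _ y _ hxy
          have := congrArg (fun z => p.1 - z) hxy
          simpa using this
      _ ≤ ∑ m ∈ N1, (decayCoef C D M1 m : ℝ) * (decayCoef B C M2 (n - m) : ℝ) := by
          refine sum_le_of_vanishing
            (fun m => (decayCoef C D M1 m : ℝ) * (decayCoef B C M2 (n - m) : ℝ)) hRHSnn N1 ?_ _
          intro k hk
          have h0 : decayCoef C D M1 k = 0 := decayCoef_zero C D M1 k (by rwa [← hN1])
          show (decayCoef C D M1 k : ℝ) * (decayCoef B C M2 (n - k) : ℝ) = 0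
          rw [h0]
          simp
  -- conclude via sup_le
  have hsup : decayCoef B D (mMul C M1 M2) n ≤
      (Real.toNNReal (∑ m ∈ N1, (decayCoef C D M1 m : ℝ) * (decayCoef B C M2 (n - m) : ℝ))) := by
    apply Finset.sup_le
    intro p hp
    rw [← NNReal.coe_le_coe]
    rw [Real.coe_toNNReal _ (Finset.sum_nonneg fun m _ => hRHSnn m)]
    exact hkey p hp
  calc (decayCoef B D (mMul C M1 M2) n : ℝ)
      ≤ (Real.toNNReal (∑ m ∈ N1, (decayCoef C D M1 m : ℝ) * (decayCoef B C M2 (n - m) : ℝ)) : ℝ) := by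
        exact_mod_cast hsup
    _ = ∑ m ∈ N1, (decayCoef C D M1 m : ℝ) * (decayCoef B C M2 (n - m) : ℝ) :=
        Real.coe_toNNReal _ (Finset.sum_nonneg fun m _ => hRHSnn m)

end Aux


section Final
variable {b : ℕ}

lemma sqrt_add_le {x y : ℝ} (hx : 0 ≤ x) (hy : 0 ≤ y) :
    Real.sqrt (x + y) ≤ Real.sqrt x + Real.sqrt y := by
  have h : x + y ≤ (Real.sqrt x + Real.sqrt y)^2 := by
    rw [add_sq]
    have h1 := Real.sq_sqrt hx
    have h2 := Real.sq_sqrt hy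
    nlinarith [Real.sqrt_nonneg x, Real.sqrt_nonneg y]
  calc Real.sqrt (x + y) ≤ Real.sqrt ((Real.sqrt x + Real.sqrt y)^2) := Real.sqrt_le_sqrt h
    _ = Real.sqrt x + Real.sqrt y := Real.sqrt_sq (by positivity)

lemma sNorm_nonneg (K0 s : ℝ) (B C : Finset (Site b)) (M : Site b → Site b → ℂ) :
    0 ≤ sNorm K0 s B C M := Real.sqrt_nonneg _

lemma sNormSq_nonneg {K0 : ℝ} (hK0 : 0 ≤ K0) (s : ℝ) (B C : Finset (Site b))
    (M : Site b → Site b → ℂ) : 0 ≤ sNormSq K0 s B C M := by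
  unfold sNormSq
  apply mul_nonneg hK0
  apply Finset.sum_nonneg
  intro n _
  exact mul_nonneg (sq_nonneg _) (wt_rpow_nonneg _ _)

lemma sNorm_mono {K0 s0 s : ℝ} (hK0 : 0 ≤ K0) (h : s0 ≤ s) (hwt : ∀ n : Fin b → ℤ, True)
    (B C : Finset (Site b)) (M : Site b → Site b → ℂ) :
    sNorm K0 s0 B C M ≤ sNorm K0 s B C M := by
  unfold sNorm sNormSq
  apply Real.sqrt_le_sqrt
  apply mul_le_mul_of_nonneg_left _ hK0
  apply Finset.sum_le_sum
  intro n _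
  apply mul_le_mul_of_nonneg_left _ (sq_nonneg _)
  exact Real.rpow_le_rpow_of_exponent_le (one_le_wtR n) (by linarith)

/-- the constant `C(s)` -/
noncomputable def CcDef (S K0 s : ℝ) : ℝ := max 1 (2 * Real.sqrt (2*((2*s)^s)^2*S/K0))

end Final

/-- interpolation estimates for the s-norms (Lemma 3.4). -/
theorem sNorm_interpolation
    (b : ℕ) (hb : 1 ≤ b) (s0 : ℝ) (hs0 : (b : ℝ) / 2 < s0) :
    ∃ K0 : ℝ, 1 ≤ K0 ∧ ∃ Cc : ℝ → ℝ,
      Cc s0 = 1 ∧ (∀ s, s0 ≤ s → 1 ≤ Cc s) ∧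
      ∀ s, s0 ≤ s → ∀ (B C D : Finset (Site b)) (M1 M2 : Site b → Site b → ℂ),
        sNorm K0 s B D (mMul C M1 M2) ≤
          (1 / 2) * sNorm K0 s0 C D M1 * sNorm K0 s B C M2
            + (Cc s / 2) * sNorm K0 s C D M1 * sNorm K0 s0 B C M2 ∧
        sNorm K0 s B D (mMul C M1 M2) ≤
          Cc s * sNorm K0 s C D M1 * sNorm K0 s B C M2 := by
  classical
  have hbR : (1:ℝ) ≤ b := by exact_mod_cast hb
  have h0 : (1:ℝ)/2 < s0 := by linarith
  have hs0pos : (0:ℝ) < s0 := by linarith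
  have hS1 : 1 ≤ Sconst b s0 := one_le_Sconst hb hs0
  have hE1 : 1 ≤ Econst s0 := one_le_Econst h0
  have hkap0 : (0:ℝ) ≤ (2*s0)^(2*s0 : ℝ) := Real.rpow_nonneg (by linarith) _
  set S := Sconst b s0 with hSdef
  set E := Econst s0 with hEdef
  set K0 : ℝ := 8 * S * (E^2 + (2*s0)^(2*s0 : ℝ)) with hK0def
  have hK0pos : (0:ℝ) < K0 := by nlinarith
  have hK01 : (1:ℝ) ≤ K0 := by nlinarith
  have hK0ne : K0 ≠ 0 := ne_of_gt hK0pos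
  have sqrt_quarter : Real.sqrt (1/4 : ℝ) = 1/2 := by
    rw [show (1:ℝ)/4 = (1/2)^2 by norm_num, Real.sqrt_sq (by norm_num)]
  have coef1 : Real.sqrt (2*E^2*S/K0) ≤ 1/2 := by
    have hrad : 2*E^2*S/K0 ≤ 1/4 := by
      rw [div_le_iff₀ hK0pos]
      nlinarith
    calc Real.sqrt (2*E^2*S/K0) ≤ Real.sqrt (1/4) := Real.sqrt_le_sqrt hrad
      _ = 1/2 := sqrt_quarter
  have coef2s0 : Real.sqrt (2*((2*s0)^s0)^2*S/K0) ≤ 1/2 := by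
    have hsq : ((2*s0)^(s0:ℝ))^2 = (2*s0)^(2*s0 : ℝ) := rpow_sq _ _ (by linarith)
    have hrad : 2*((2*s0)^(s0:ℝ))^2*S/K0 ≤ 1/4 := by
      rw [hsq, div_le_iff₀ hK0pos]
      nlinarith
    calc Real.sqrt (2*((2*s0)^(s0:ℝ))^2*S/K0) ≤ Real.sqrt (1/4) := Real.sqrt_le_sqrt hrad
      _ = 1/2 := sqrt_quarter
  refine ⟨K0, hK01, CcDef S K0, ?_, ?_, ?_⟩
  · -- Cc s0 = 1
    unfold CcDef
    exact max_eq_left (by linarith)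
  · intro s _
    exact le_max_left _ _
  intro s hs B C D M1 M2
  have hspos : (0:ℝ) < s := by linarith
  have hCc1 : (1:ℝ) ≤ CcDef S K0 s := le_max_left _ _
  have hCc2 : Real.sqrt (2*((2*s)^s)^2*S/K0) ≤ CcDef S K0 s / 2 := by
    have := le_max_right (1:ℝ) (2 * Real.sqrt (2*((2*s)^s)^2*S/K0))
    unfold CcDef
    linarith
  set P := mMul C M1 M2 with hPdef
  set c1 : (Fin b → ℤ) → ℝ := fun m => (decayCoef C D M1 m : ℝ) with hc1
  set c2 : (Fin b → ℤ) → ℝ := fun m => (decayCoef B C M2 m : ℝ) with hc2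
  set N1 := ((D.image Prod.fst) ×ˢ (C.image Prod.fst)).image (fun p => p.1 - p.2) with hN1
  set N2 := ((C.image Prod.fst) ×ˢ (B.image Prod.fst)).image (fun p => p.1 - p.2) with hN2
  set Np := ((D.image Prod.fst) ×ˢ (B.image Prod.fst)).image (fun p => p.1 - p.2) with hNp
  have hX1 : ∀ t : ℝ, sNormSq K0 t C D M1 = K0 * ∑ m ∈ N1, c1 m^2 * (wt m:ℝ)^(2*t) :=
    fun t => rfl
  have hX2 : ∀ t : ℝ, sNormSq K0 t B C M2 = K0 * ∑ m ∈ N2, c2 m^2 * (wt m:ℝ)^(2*t) :=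
    fun t => rfl
  have hXP : sNormSq K0 s B D P
      = K0 * ∑ n ∈ Np, (decayCoef B D P n : ℝ)^2 * (wt n:ℝ)^(2*s) := rfl
  have step1 : ∑ n ∈ Np, (decayCoef B D P n : ℝ)^2 * (wt n:ℝ)^(2*s)
      ≤ ∑ n ∈ Np, (∑ m ∈ N1, c1 m * c2 (n-m))^2 * (wt n:ℝ)^(2*s) := by
    apply Finset.sum_le_sum
    intro n _
    apply mul_le_mul_of_nonneg_right _ (wt_rpow_nonneg n _)
    apply pow_le_pow_left₀ (NNReal.coe_nonneg _) _ 2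
    exact decayCoef_mMul_le B C D M1 M2 n
  have step2 : ∑ n ∈ Np, (∑ m ∈ N1, c1 m * c2 (n-m))^2 * (wt n:ℝ)^(2*s)
      ≤ 2*E^2*S * ((∑ m ∈ N1, c1 m^2*(wt m:ℝ)^(2*s0)) * (∑ m ∈ N2, c2 m^2*(wt m:ℝ)^(2*s)))
      + 2*((2*s)^s)^2*S * ((∑ m ∈ N1, c1 m^2*(wt m:ℝ)^(2*s)) * (∑ m ∈ N2, c2 m^2*(wt m:ℝ)^(2*s0))) := by
    refine conv_estimate hb hs0 hs c1 c2 (fun m => NNReal.coe_nonneg _)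
      (fun m => NNReal.coe_nonneg _) N1 N2 ?_ Np
    intro m hm
    have hz : decayCoef B C M2 m = 0 := decayCoef_zero B C M2 m (by rwa [← hN2])
    simp only [hc1, hc2, hz, NNReal.coe_zero]
  have hsqbound : sNormSq K0 s B D P ≤
      (2*E^2*S/K0) * (sNormSq K0 s0 C D M1 * sNormSq K0 s B C M2)
      + (2*((2*s)^s)^2*S/K0) * (sNormSq K0 s C D M1 * sNormSq K0 s0 B C M2) := by
    have h1 : sNormSq K0 s B D P ≤
        K0 * (2*E^2*S * ((∑ m ∈ N1, c1 m^2*(wt m:ℝ)^(2*s0)) * (∑ m ∈ N2, c2 m^2*(wt m:ℝ)^(2*s)))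
          + 2*((2*s)^s)^2*S * ((∑ m ∈ N1, c1 m^2*(wt m:ℝ)^(2*s)) * (∑ m ∈ N2, c2 m^2*(wt m:ℝ)^(2*s0)))) := by
      rw [hXP]
      exact mul_le_mul_of_nonneg_left (le_trans step1 step2) (le_of_lt hK0pos)
    refine h1.trans (le_of_eq ?_)
    rw [hX1 s0, hX1 s, hX2 s, hX2 s0]
    field_simp
  have hq1 : 0 ≤ sNormSq K0 s0 C D M1 := sNormSq_nonneg (le_of_lt hK0pos) _ _ _ _
  have hq2 : 0 ≤ sNormSq K0 s B C M2 := sNormSq_nonneg (le_of_lt hK0pos) _ _ _ _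
  have hq3 : 0 ≤ sNormSq K0 s C D M1 := sNormSq_nonneg (le_of_lt hK0pos) _ _ _ _
  have hq4 : 0 ≤ sNormSq K0 s0 B C M2 := sNormSq_nonneg (le_of_lt hK0pos) _ _ _ _
  have hcA : (0:ℝ) ≤ 2*E^2*S/K0 := by positivity
  have hcB : (0:ℝ) ≤ 2*((2*s)^s)^2*S/K0 := by
    have h2s : (0:ℝ) ≤ (2*s)^(s:ℝ) := Real.rpow_nonneg (by linarith) _
    positivity
  have main : sNorm K0 s B D P ≤
      Real.sqrt (2*E^2*S/K0) * (sNorm K0 s0 C D M1 * sNorm K0 s B C M2)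
      + Real.sqrt (2*((2*s)^s)^2*S/K0) * (sNorm K0 s C D M1 * sNorm K0 s0 B C M2) := by
    have hA : 0 ≤ (2*E^2*S/K0) * (sNormSq K0 s0 C D M1 * sNormSq K0 s B C M2) := by
      exact mul_nonneg hcA (mul_nonneg hq1 hq2)
    have hB : 0 ≤ (2*((2*s)^s)^2*S/K0) * (sNormSq K0 s C D M1 * sNormSq K0 s0 B C M2) := by
      exact mul_nonneg hcB (mul_nonneg hq3 hq4)
    calc sNorm K0 s B D P = Real.sqrt (sNormSq K0 s B D P) := rfl
      _ ≤ Real.sqrt ((2*E^2*S/K0) * (sNormSq K0 s0 C D M1 * sNormSq K0 s B C M2)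
          + (2*((2*s)^s)^2*S/K0) * (sNormSq K0 s C D M1 * sNormSq K0 s0 B C M2)) :=
          Real.sqrt_le_sqrt hsqbound
      _ ≤ Real.sqrt ((2*E^2*S/K0) * (sNormSq K0 s0 C D M1 * sNormSq K0 s B C M2))
          + Real.sqrt ((2*((2*s)^s)^2*S/K0) * (sNormSq K0 s C D M1 * sNormSq K0 s0 B C M2)) :=
          sqrt_add_le hA hB
      _ = Real.sqrt (2*E^2*S/K0) * (sNorm K0 s0 C D M1 * sNorm K0 s B C M2)
          + Real.sqrt (2*((2*s)^s)^2*S/K0) * (sNorm K0 s C D M1 * sNorm K0 s0 B C M2) := by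
          rw [Real.sqrt_mul hcA, Real.sqrt_mul hq1, Real.sqrt_mul hcB, Real.sqrt_mul hq3]
          rfl
  have hn1 : 0 ≤ sNorm K0 s0 C D M1 := sNorm_nonneg _ _ _ _ _
  have hn2 : 0 ≤ sNorm K0 s B C M2 := sNorm_nonneg _ _ _ _ _
  have hn3 : 0 ≤ sNorm K0 s C D M1 := sNorm_nonneg _ _ _ _ _
  have hn4 : 0 ≤ sNorm K0 s0 B C M2 := sNorm_nonneg _ _ _ _ _
  have first : sNorm K0 s B D P ≤
      (1/2) * sNorm K0 s0 C D M1 * sNorm K0 s B C M2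
      + (CcDef S K0 s / 2) * sNorm K0 s C D M1 * sNorm K0 s0 B C M2 := by
    calc sNorm K0 s B D P ≤
        Real.sqrt (2*E^2*S/K0) * (sNorm K0 s0 C D M1 * sNorm K0 s B C M2)
        + Real.sqrt (2*((2*s)^s)^2*S/K0) * (sNorm K0 s C D M1 * sNorm K0 s0 B C M2) := main
      _ ≤ (1/2) * (sNorm K0 s0 C D M1 * sNorm K0 s B C M2)
          + (CcDef S K0 s / 2) * (sNorm K0 s C D M1 * sNorm K0 s0 B C M2) := by
          apply add_le_add
          · exact mul_le_mul_of_nonneg_right coef1 (mul_nonneg hn1 hn2)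
          · exact mul_le_mul_of_nonneg_right hCc2 (mul_nonneg hn3 hn4)
      _ = (1/2) * sNorm K0 s0 C D M1 * sNorm K0 s B C M2
          + (CcDef S K0 s / 2) * sNorm K0 s C D M1 * sNorm K0 s0 B C M2 := by ring
  refine ⟨first, ?_⟩
  have hmono1 : sNorm K0 s0 C D M1 ≤ sNorm K0 s C D M1 :=
    sNorm_mono (le_of_lt hK0pos) hs (fun _ => trivial) _ _ _
  have hmono2 : sNorm K0 s0 B C M2 ≤ sNorm K0 s B C M2 :=
    sNorm_mono (le_of_lt hK0pos) hs (fun _ => trivial) _ _ _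
  calc sNorm K0 s B D P ≤
      (1/2) * sNorm K0 s0 C D M1 * sNorm K0 s B C M2
      + (CcDef S K0 s / 2) * sNorm K0 s C D M1 * sNorm K0 s0 B C M2 := first
    _ ≤ (CcDef S K0 s / 2) * sNorm K0 s C D M1 * sNorm K0 s B C M2
        + (CcDef S K0 s / 2) * sNorm K0 s C D M1 * sNorm K0 s B C M2 := by
        apply add_le_add
        · have e1 : (1/2) * sNorm K0 s0 C D M1 * sNorm K0 s B C M2
              ≤ (1/2) * sNorm K0 s C D M1 * sNorm K0 s B C M2 := by
            apply mul_le_mul_of_nonneg_right _ hn2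
            apply mul_le_mul_of_nonneg_left hmono1 (by norm_num)
          have e2 : (1/2) * sNorm K0 s C D M1 * sNorm K0 s B C M2
              ≤ (CcDef S K0 s / 2) * sNorm K0 s C D M1 * sNorm K0 s B C M2 := by
            apply mul_le_mul_of_nonneg_right _ hn2
            apply mul_le_mul_of_nonneg_right _ hn3
            linarith
          linarith
        · apply mul_le_mul_of_nonneg_left hmono2
          have : 0 ≤ CcDef S K0 s / 2 := by linarith
          exact mul_nonneg this hn3
    _ = CcDef S K0 s * sNorm K0 s C D M1 * sNorm K0 s B C M2 := by ring


end NLSPaper
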